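/- arXiv:2512.20939 — 2 statements merged into one kernel-verified Lean document; each statement's English description precedes it below -/
import Mathlib

section
/- In a well-structured transition system (S,≤,→) with upward-closed target set T, there exists a fixed k ∈ ℕ such that for every s ∈ S, either T is reachable from s in at most k steps, or T is not reachable from s at all. -/
/-- A well-quasi-order. -/
def IsWQO {S : Type*} (le : S → S → Prop) : Prop :=
  Reflexive le ∧ Transitive le ∧ ∀ f : ℕ → S, ∃ i j : ℕ, i < j ∧ le (f i) (f j)

/-- One-step predecessors of a set. -/
def Pred {S : Type*} (step : S → S → Prop) (T : Set S) : Set S :=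
  {s | ∃ t ∈ T, step s t}

theorem maximum_distance {S : Type*} (le step : S → S → Prop)
    (hwqo : IsWQO le)
    (hcompat : ∀ s s' t, step s s' → le s t → ∃ t', step t t' ∧ le s' t')
    (T : Set S) (hT : ∀ x y, x ∈ T → le x y → y ∈ T) :
    ∃ k : ℕ, ∀ s : S,
      (∃ l ≤ k, s ∈ (Pred step)^[l] T) ∨ ¬ (∃ t ∈ T, Relation.ReflTransGen step s t) := by
  classical
  obtain ⟨hrefl, htrans, hwqo⟩ := hwqo
  set V : ℕ → Set S := fun n => {s | ∃ l ≤ n, s ∈ (Pred step)^[l] T} with hV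
  have hup : ∀ l, ∀ x y : S, x ∈ (Pred step)^[l] T → le x y → y ∈ (Pred step)^[l] T := by
    intro l
    induction l with
    | zero => simpa using hT
    | succ n ih =>
      intro x y hx hxy
      rw [Function.iterate_succ_apply'] at hx ⊢
      obtain ⟨t, ht, hst⟩ := hx
      obtain ⟨t', h1, h2⟩ := hcompat x t y hst hxy
      exact ⟨t', ih t t' ht h2, h1⟩
  have hVup : ∀ n, ∀ x y : S, x ∈ V n → le x y → y ∈ V n := by
    rintro n x y ⟨l, hl, hx⟩ hxy
    exact ⟨l, hl, hup l x y hx hxy⟩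
  have hVmono : ∀ m n, m ≤ n → V m ⊆ V n := by
    rintro m n hmn x ⟨l, hl, hx⟩
    exact ⟨l, hl.trans hmn, hx⟩
  have hstab : ∃ k, V (k + 1) ⊆ V k := by
    by_contra h
    push_neg at h
    choose f hf1 hf2 using fun k => Set.not_subset.mp (h k)
    obtain ⟨i, j, hij, hle⟩ := hwqo f
    exact hf2 j (hVup j (f i) (f j) (hVmono (i + 1) j hij (hf1 i)) hle)
  obtain ⟨k, hk⟩ := hstab
  have hall : ∀ n, V n ⊆ V k := by
    intro n
    induction n with
    | zero => exact hVmono 0 k (Nat.zero_le k)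
    | succ n ih =>
      rintro x ⟨l, hl, hx⟩
      rcases Nat.lt_or_ge l (n + 1) with h' | h'
      · exact ih ⟨l, Nat.lt_succ_iff.mp h', hx⟩
      · have hln : l = n + 1 := le_antisymm hl h'
        subst hln
        rw [Function.iterate_succ_apply'] at hx
        obtain ⟨y, hy, hstep⟩ := hx
        obtain ⟨m, hm, hym⟩ := ih ⟨n, le_refl n, hy⟩
        apply hk
        refine ⟨m + 1, Nat.succ_le_succ hm, ?_⟩
        rw [Function.iterate_succ_apply']
        exact ⟨y, hym, hstep⟩
  refine ⟨k, fun s => ?_⟩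
  by_cases hr : ∃ t ∈ T, Relation.ReflTransGen step s t
  · left
    obtain ⟨t, htT, htr⟩ := hr
    have hex : ∃ l, s ∈ (Pred step)^[l] T := by
      induction htr using Relation.ReflTransGen.head_induction_on with
      | refl => exact ⟨0, htT⟩
      | head hstep _ ih =>
        obtain ⟨l, hl⟩ := ih
        exact ⟨l + 1, by rw [Function.iterate_succ_apply']; exact ⟨_, hl, hstep⟩⟩
    obtain ⟨l, hl⟩ := hex
    exact hall l ⟨l, le_refl l, hl⟩
  · right; exact hr
end

section
/- (Higman's Lemma) If (Q,≤) is a well-quasi-order, then the subsequence-embedding order on finite sequences Q* — where x ≤ y iff there is a strictly increasing map f from indices of x to indices of y with xᵢ ≤ y_{f(i)} for all i — is a well-quasi-order. -/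
/-- Subsequence-embedding order on finite sequences over `(Q, le)`. -/
def ListEmb {Q : Type*} (le : Q → Q → Prop) (x y : List Q) : Prop :=
  ∃ f : Fin x.length → Fin y.length, StrictMono f ∧ ∀ i, le (x.get i) (y.get (f i))

/-! Mathlib proves Higman's lemma (by a minimal bad sequence argument) for `List.SublistForall₂ r`,
"`l₁` is related pointwise by `r` to a sublist of `l₂`". That relation implies `ListEmb`: a
sublist is the image of a strictly increasing map of indices. -/

theorem WellQuasiOrdered.mono {α : Type*} {r s : α → α → Prop} (hrs : ∀ a b, r a b → s a b)
    (h : WellQuasiOrdered r) : WellQuasiOrdered s := fun f ↦ by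
  obtain ⟨m, n, hmn, hr⟩ := h f
  exact ⟨m, n, hmn, hrs _ _ hr⟩

theorem WellQuasiOrdered.sublistForall₂ {α : Type*} {r : α → α → Prop} [IsPreorder α r]
    (h : WellQuasiOrdered r) : WellQuasiOrdered (List.SublistForall₂ r) := by
  rw [← Set.partiallyWellOrderedOn_univ_iff] at h ⊢
  exact (h.partiallyWellOrderedOn_sublistForall₂ r).mono fun _ _ _ _ ↦ Set.mem_univ _

namespace ListEmb

variable {Q : Type*} {le : Q → Q → Prop}

theorem refl (hrefl : ∀ a, le a a) (x : List Q) : ListEmb le x x :=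
  ⟨id, strictMono_id, fun _ ↦ hrefl _⟩

theorem trans (htrans : ∀ ⦃a b c⦄, le a b → le b c → le a c) {x y z : List Q} :
    ListEmb le x y → ListEmb le y z → ListEmb le x z := by
  rintro ⟨f, hf, hfle⟩ ⟨g, hg, hgle⟩
  exact ⟨g ∘ f, hg.comp hf, fun i ↦ htrans (hfle i) (hgle (f i))⟩

theorem of_sublistForall₂ {x y : List Q} (h : List.SublistForall₂ le x y) : ListEmb le x y := by
  obtain ⟨l, hxl, hly⟩ := List.sublistForall₂_iff.1 h
  obtain ⟨g, hg⟩ := List.sublist_iff_exists_fin_orderEmbedding_get_eq.1 hly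
  have hlen := hxl.length_eq
  refine ⟨fun i ↦ g ⟨i, hlen ▸ i.2⟩, fun a b hab ↦ g.strictMono (by simpa using hab), fun i ↦ ?_⟩
  rw [← hg]
  exact hxl.get i.2 _

end ListEmb

/-- Higman's Lemma. -/
theorem higman {Q : Type*} (le : Q → Q → Prop) (hwqo : IsWQO le) :
    IsWQO (ListEmb le) := by
  obtain ⟨hrefl, htrans, hwqo⟩ := hwqo
  have : IsPreorder Q le := { refl := hrefl, trans := @htrans }
  exact ⟨ListEmb.refl hrefl, fun _ _ _ ↦ ListEmb.trans htrans,
    (WellQuasiOrdered.sublistForall₂ hwqo).mono fun _ _ ↦ ListEmb.of_sublistForall₂⟩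
end
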